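/- arXiv:1402.0184 — 2 statements merged into one kernel-verified Lean document; each statement's English description precedes it below -/
import Mathlib

section
/- Let K = 𝔽_q((t)) with q a power of a prime p, let ℘(x) = x^p - x, and let 𝔭 be the maximal ideal of 𝔽_q[[t]]. Then 𝔭 ⊆ ℘(K), i.e., every element of 𝔭 is of the form x^p - x for some x ∈ K. -/
/-!
The polynomial `X ^ p - X - a` has the approximate root `0` modulo `t` when `a ∈ 𝔭`, and its
derivative `p X ^ (p - 1) - 1` is `-1` there. Since `𝔽_q[[t]]` is `t`-adically complete, hence
Henselian along `(t)`, Hensel's lemma lifts `0` to a root in `𝔽_q[[t]] ⊆ 𝔽_q((t))`.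
-/

open Polynomial

theorem HenselianRing.exists_pow_sub_self_eq {R : Type*} [CommRing R] {I : Ideal R}
    [HenselianRing R I] {n : ℕ} (hn : 2 ≤ n) {a : R} (ha : a ∈ I) : ∃ x : R, x ^ n - x = a := by
  have hmonic : (X ^ n - (X - C (-a)) : R[X]).Monic :=
    monic_X_pow_sub ((degree_X_sub_C_le _).trans_lt (by exact_mod_cast hn))
  obtain ⟨x, hx, -⟩ := HenselianRing.is_henselian (I := I) _ hmonic 0
    (by simpa [zero_pow (by omega : n ≠ 0)] using ha)
    (by simp [derivative_X_pow, zero_pow (by omega : n - 1 ≠ 0)])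
  exact ⟨x, by simp at hx; linear_combination hx⟩

theorem PowerSeries.exists_pow_sub_self_eq {R : Type*} [CommRing R] {n : ℕ} (hn : 2 ≤ n)
    {a : PowerSeries R} (ha : constantCoeff a = 0) : ∃ x : PowerSeries R, x ^ n - x = a :=
  HenselianRing.exists_pow_sub_self_eq (I := .span {X}) hn
    (Ideal.mem_span_singleton.mpr (X_dvd_iff.mpr ha))

/-- The maximal ideal `𝔭 = t·𝔽_q[[t]]` of the valuation ring `𝔽_q[[t]]`, viewed as a
subset of the local function field `K = 𝔽_q((t))` (formal Laurent series). -/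
def laurentMaximalIdeal (F : Type*) [Field F] : Set (LaurentSeries F) :=
  {x | ∃ y : PowerSeries F, PowerSeries.constantCoeff (R := F) y = 0 ∧
        HahnSeries.ofPowerSeries ℤ F y = x}

theorem maximalIdeal_subset_artin_schreier_image_general (p f : ℕ) [Fact p.Prime] :
    ∀ a ∈ laurentMaximalIdeal (GaloisField p f),
      ∃ x : LaurentSeries (GaloisField p f), x ^ p - x = a := by
  rintro _ ⟨y, hy, rfl⟩
  obtain ⟨x, hx⟩ := PowerSeries.exists_pow_sub_self_eq (Fact.out : p.Prime).two_le hy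
  exact ⟨HahnSeries.ofPowerSeries ℤ _ x, by rw [← map_pow, ← map_sub, hx]⟩

/-- For `K = 𝔽_q((t))` (`q` a power of the prime `p`), every element of the maximal
ideal `𝔭` is of the form `x^p - x` for some `x ∈ K`; that is, `𝔭 ⊆ ℘(K)`. -/
theorem maximalIdeal_subset_artin_schreier_image (p f : ℕ) [Fact p.Prime] [NeZero f] :
    ∀ a ∈ laurentMaximalIdeal (GaloisField p f),
      ∃ x : LaurentSeries (GaloisField p f), x ^ p - x = a :=
  maximalIdeal_subset_artin_schreier_image_general p f
end

section
/- Let K = 𝔽_q((t)) with q = p^f, p prime. Then the quotient group K^×/(K^×)^p of the multiplicative group by the subgroup of p-th powers is infinite. -/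
/-!
The units `1 + X ^ (n * p + 1)` are pairwise incongruent modulo `p`-th powers. If
`(1 + X ^ (a * p + 1)) * g ^ p = 1 + X ^ (b * p + 1)`, comparing orders shows that `g` is a power
series; since `d/dX` kills `p`-th powers in characteristic `p`, differentiating gives
`g ^ p * X ^ (a * p) = X ^ (b * p)`, and as `g ^ p` has constant coefficient `1` this forces
`a = b`.
-/

open PowerSeries LaurentSeries

namespace PowerSeries

variable {R : Type*} [CommSemiring R] (p : ℕ) [CharP R p]

instance charP : CharP R⟦X⟧ p := charP_of_injective_ringHom C_injective p

theorem derivative_pow_char (f : R⟦X⟧) : d⁄dX R (f ^ p) = 0 := by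
  rw [derivative_pow, CharP.cast_eq_zero, zero_mul, zero_mul]

theorem derivative_one_add_X_pow_mul_char_add_one (n : ℕ) :
    d⁄dX R (1 + X ^ (n * p + 1)) = X ^ (n * p) := by
  simp

theorem eq_of_one_add_X_pow_mul_pow_char_eq [NeZero p] [Nontrivial R] {a b : ℕ} {f : R⟦X⟧}
    (h : (1 + X ^ (a * p + 1)) * f ^ p = 1 + X ^ (b * p + 1)) : a = b := by
  have hconst : constantCoeff (f ^ p) = 1 := by
    simpa using congrArg constantCoeff h
  have hderiv : f ^ p * X ^ (a * p) = X ^ (b * p) := by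
    simpa [derivative_pow_char, derivative_one_add_X_pow_mul_char_add_one] using
      congrArg (d⁄dX R) h
  have hcoeff := congrArg (coeff (a * p)) hderiv
  rw [coeff_mul_X_pow', if_pos le_rfl, Nat.sub_self, coeff_zero_eq_constantCoeff, hconst,
    coeff_X_pow] at hcoeff
  have hab : a * p = b * p := by
    by_contra hne
    simp [hne] at hcoeff
  exact Nat.eq_of_mul_eq_mul_right (NeZero.pos p) hab

end PowerSeries

namespace LaurentSeries

variable {R : Type*}

theorem order_coe_powerSeries_eq_zero [Semiring R] {f : R⟦X⟧} (hf : constantCoeff f ≠ 0) :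
    (f : R⸨X⸩).order = 0 := by
  have hcoeff : (f : R⸨X⸩).coeff 0 ≠ 0 := by
    simpa using (coeff_coe_powerSeries f 0).trans_ne (by rwa [coeff_zero_eq_constantCoeff])
  refine le_antisymm (HahnSeries.order_le_of_coeff_ne_zero hcoeff)
    ((HahnSeries.le_order_iff_forall (fun h => hcoeff (by rw [h]; rfl))).2 fun j hj => ?_)
  rw [HahnSeries.ofPowerSeries_apply, HahnSeries.embDomain_of_notMem_range]
  rintro ⟨k, rfl⟩
  exact (Nat.cast_nonneg k).not_gt hj

theorem coe_powerSeriesPart_eq_of_coe_mul_pow_eq_coe [Semiring R] [NoZeroDivisors R] {n : ℕ}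
    (hn : n ≠ 0) {f₁ f₂ : R⟦X⟧} (h₁ : constantCoeff f₁ ≠ 0) (h₂ : constantCoeff f₂ ≠ 0)
    {g : R⸨X⸩} (hg : g ≠ 0) (h : (f₁ : R⸨X⸩) * g ^ n = f₂) :
    (g.powerSeriesPart : R⸨X⸩) = g := by
  have hf₁ : (f₁ : R⸨X⸩) ≠ 0 := fun h0 => h₁ (by
    rw [HahnSeries.ofPowerSeries_injective (h0.trans (map_zero _).symm), map_zero])
  have hord : g.order = 0 := by
    have := congrArg HahnSeries.order h
    rw [HahnSeries.order_mul hf₁ (pow_ne_zero n hg), HahnSeries.order_pow,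
      order_coe_powerSeries_eq_zero h₁, order_coe_powerSeries_eq_zero h₂] at this
    simpa [hn] using this
  rw [ofPowerSeries_powerSeriesPart, hord, neg_zero, HahnSeries.single_zero_one, one_mul]

theorem eq_of_one_add_X_pow_mul_pow_char_eq [CommRing R] [IsDomain R]
    (p : ℕ) [CharP R p] [NeZero p] {a b : ℕ} {g : R⸨X⸩} (hg : g ≠ 0)
    (h : ((1 + X ^ (a * p + 1) : R⟦X⟧) : R⸨X⸩) * g ^ p = (1 + X ^ (b * p + 1) : R⟦X⟧)) :
    a = b := by
  have hg' := coe_powerSeriesPart_eq_of_coe_mul_pow_eq_coe (NeZero.ne p) (by simp) (by simp) hg h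
  rw [← hg', ← map_pow, ← map_mul] at h
  exact PowerSeries.eq_of_one_add_X_pow_mul_pow_char_eq p (HahnSeries.ofPowerSeries_injective h)

theorem infinite_units_quotient_powMonoidHom_range [CommRing R] [IsDomain R]
    (p : ℕ) [CharP R p] [NeZero p] :
    Infinite (R⸨X⸩ˣ ⧸ (powMonoidHom (α := R⸨X⸩ˣ) p).range) := by
  let u (n : ℕ) : R⸨X⸩ˣ := Units.map (HahnSeries.ofPowerSeries ℤ R)
    (isUnit_iff_constantCoeff.2 (by simp) : IsUnit (1 + X ^ (n * p + 1) : R⟦X⟧)).unit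
  refine Infinite.of_injective
    (fun n => (QuotientGroup.mk (u n) : R⸨X⸩ˣ ⧸ (powMonoidHom (α := R⸨X⸩ˣ) p).range))
    fun a b hab => ?_
  obtain ⟨g, hg⟩ := QuotientGroup.eq.1 hab
  have hgp : (u a : R⸨X⸩) * (g : R⸨X⸩) ^ p = u b := by
    rw [← Units.val_pow_eq_pow_val, ← Units.val_mul, ← powMonoidHom_apply, hg, mul_inv_cancel_left]
  exact eq_of_one_add_X_pow_mul_pow_char_eq p g.ne_zero hgp

end LaurentSeries

theorem units_mod_pth_powers_infinite_general (p f : ℕ) [Fact p.Prime] :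
    Infinite ((LaurentSeries (GaloisField p f))ˣ ⧸
      (powMonoidHom (α := (LaurentSeries (GaloisField p f))ˣ) p).range) :=
  LaurentSeries.infinite_units_quotient_powMonoidHom_range p

/-- For `K = 𝔽_q((t))` with `q = p^f`, `p` prime, the quotient `K^×/(K^×)^p` of the
multiplicative group of `K` by the subgroup of `p`-th powers is infinite. -/
theorem units_mod_pth_powers_infinite (p f : ℕ) [Fact p.Prime] [NeZero f] :
    Infinite ((LaurentSeries (GaloisField p f))ˣ ⧸
      (powMonoidHom (α := (LaurentSeries (GaloisField p f))ˣ) p).range) :=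
  units_mod_pth_powers_infinite_general p f
end
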